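/- arXiv:1611.03943 — 2 statements merged into one kernel-verified Lean document; each statement's English description precedes it below -/
import Mathlib

section
/- Let (G,β,R) be a reduced skew root system of Lie type and (R,E) its graph, where {a,b} ∈ E iff a≠b and β(a,b) ≠ 1. If R_1 is a connected component of (R,E), then |R_1| > 1 and R_1 = −R_1. -/
/-!
A root `a` is not in the radical, so `β a` is a nontrivial character of `G`; since `R` generates
`G`, it is nontrivial on some root `r`, which is then a neighbour of `a`. Moreover
`β r (-b) = β b r` by skew-symmetry, so every neighbour `r` of `b` is also a neighbour of `-b`,
and `-b` lies in the component of `b`.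
-/

/-- A bicharacter of `G` with values in `Fˣ`. -/
def IsBichar {G : Type*} [AddCommGroup G] {F : Type*} [Field F] (ξ : G → G → Fˣ) : Prop :=
  (∀ a b c : G, ξ (a + b) c = ξ a c * ξ b c) ∧ (∀ a b c : G, ξ a (b + c) = ξ a b * ξ a c)

/-- An alternating bicharacter of `G`. -/
def IsAltBichar {G : Type*} [AddCommGroup G] {F : Type*} [Field F] (β : G → G → Fˣ) : Prop :=
  IsBichar β ∧ ∀ g : G, β g g = 1

/-- `R` is a skew root system of Lie type in `(G, β)`. -/
def IsSkewRootLie {G : Type*} [AddCommGroup G] {F : Type*} [Field F]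
    (β : G → G → Fˣ) (R : Set G) : Prop :=
  (∀ a ∈ R, ∃ h : G, β a h ≠ 1) ∧ AddSubgroup.closure R = ⊤ ∧
  (∀ a ∈ R, -a ∈ R) ∧ ∀ a ∈ R, ∀ b ∈ R, β a b ≠ 1 → a + b ∈ R

/-- The adjacency relation of the graph `(R, E)` of a skew root system of Lie type:
`{a,b} ∈ E` iff `a ≠ b` and `β a b ≠ 1`. -/
def LieGraphAdj {G : Type*} [AddCommGroup G] {F : Type*} [Field F]
    (β : G → G → Fˣ) (R : Set G) (a b : G) : Prop :=
  a ∈ R ∧ b ∈ R ∧ a ≠ b ∧ β a b ≠ 1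

section Bicharacter

variable {G : Type*} [AddCommGroup G] {F : Type*} [Field F] {β : G → G → Fˣ}

def IsBichar.rightHom (hβ : IsBichar β) (a : G) : G →+ Additive Fˣ :=
  AddMonoidHom.mk' (fun g => Additive.ofMul (β a g)) (hβ.2 a)

theorem IsBichar.mem_ker_rightHom (hβ : IsBichar β) {a g : G} :
    g ∈ (hβ.rightHom a).ker ↔ β a g = 1 :=
  ofMul_eq_zero

theorem IsBichar.map_neg_right (hβ : IsBichar β) (a b : G) : β a (-b) = (β a b)⁻¹ :=
  (hβ.rightHom a).map_neg b

theorem IsAltBichar.swap (hβ : IsAltBichar β) (a b : G) : β b a = (β a b)⁻¹ := by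
  have h := hβ.2 (a + b)
  rw [hβ.1.1, hβ.1.2, hβ.1.2, hβ.2, hβ.2, one_mul, mul_one] at h
  exact (inv_eq_of_mul_eq_one_right h).symm

theorem IsAltBichar.map_neg_swap (hβ : IsAltBichar β) (a b : G) : β b (-a) = β a b := by
  rw [hβ.1.map_neg_right, hβ.swap, inv_inv]

end Bicharacter

section SkewRootLie

variable {G : Type*} [AddCommGroup G] {F : Type*} [Field F] {β : G → G → Fˣ} {R : Set G}

theorem IsSkewRootLie.exists_mem_ne_one (hR : IsSkewRootLie β R) (hβ : IsBichar β) {a : G}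
    (ha : a ∈ R) : ∃ r ∈ R, β a r ≠ 1 := by
  by_contra! h
  obtain ⟨g, hg⟩ := hR.1 a ha
  have hker : AddSubgroup.closure R ≤ (hβ.rightHom a).ker :=
    (AddSubgroup.closure_le _).mpr fun r hr => hβ.mem_ker_rightHom.mpr (h r hr)
  rw [hR.2.1] at hker
  exact hg (hβ.mem_ker_rightHom.mp (hker (AddSubgroup.mem_top g)))

theorem IsAltBichar.lieGraphAdj_of_ne_one (hβ : IsAltBichar β) {a b : G} (ha : a ∈ R)
    (hb : b ∈ R) (h : β a b ≠ 1) : LieGraphAdj β R a b :=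
  ⟨ha, hb, by rintro rfl; exact h (hβ.2 a), h⟩

theorem IsSkewRootLie.exists_lieGraphAdj (hR : IsSkewRootLie β R) (hβ : IsAltBichar β) {a : G}
    (ha : a ∈ R) : ∃ r, LieGraphAdj β R a r :=
  let ⟨r, hr, hne⟩ := hR.exists_mem_ne_one hβ.1 ha
  ⟨r, hβ.lieGraphAdj_of_ne_one ha hr hne⟩

theorem LieGraphAdj.ne {a b : G} (h : LieGraphAdj β R a b) : a ≠ b :=
  h.2.2.1

theorem IsSkewRootLie.lieGraphAdj_neg (hR : IsSkewRootLie β R) (hβ : IsAltBichar β) {b r : G}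
    (h : LieGraphAdj β R b r) : LieGraphAdj β R r (-b) :=
  hβ.lieGraphAdj_of_ne_one h.2.1 (hR.2.2.1 b h.1) (by rw [hβ.map_neg_swap]; exact h.2.2.2)

end SkewRootLie

theorem skewRootLie_component_general
    {G : Type*} [AddCommGroup G] {F : Type*} [Field F]
    (β : G → G → Fˣ) (hβ : IsAltBichar β)
    (R : Set G) (hR : IsSkewRootLie β R)
    (a : G) (ha : a ∈ R) :
    (∃ x ∈ {b | b ∈ R ∧ Relation.ReflTransGen (LieGraphAdj β R) a b},
       ∃ y ∈ {b | b ∈ R ∧ Relation.ReflTransGen (LieGraphAdj β R) a b}, x ≠ y) ∧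
    (∀ b ∈ {b | b ∈ R ∧ Relation.ReflTransGen (LieGraphAdj β R) a b},
       -b ∈ {b | b ∈ R ∧ Relation.ReflTransGen (LieGraphAdj β R) a b}) := by
  constructor
  · obtain ⟨r, hadj⟩ := hR.exists_lieGraphAdj hβ ha
    exact ⟨a, ⟨ha, .refl⟩, r, ⟨hadj.2.1, .single hadj⟩, hadj.ne⟩
  · rintro b ⟨hb, hab⟩
    obtain ⟨r, hadj⟩ := hR.exists_lieGraphAdj hβ hb
    exact ⟨hR.2.2.1 b hb, (hab.tail hadj).tail (hR.lieGraphAdj_neg hβ hadj)⟩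

/-- Let `(G,β,R)` be a reduced skew root system of Lie type with graph `(R,E)`.  Any
connected component `R₁` of the graph (here: the component of a vertex `a ∈ R`, consisting
of the vertices reachable from `a`) has more than one element and satisfies `R₁ = -R₁`. -/
theorem skewRootLie_component
    {G : Type*} [AddCommGroup G] {F : Type*} [Field F] [IsAlgClosed F] [CharZero F]
    (β : G → G → Fˣ) (hβ : IsAltBichar β)
    (hred : ∀ g : G, (∀ h : G, β g h = 1) → g = 0)
    (R : Set G) (hR : IsSkewRootLie β R)
    (a : G) (ha : a ∈ R) :
    (∃ x ∈ {b | b ∈ R ∧ Relation.ReflTransGen (LieGraphAdj β R) a b},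
       ∃ y ∈ {b | b ∈ R ∧ Relation.ReflTransGen (LieGraphAdj β R) a b}, x ≠ y) ∧
    (∀ b ∈ {b | b ∈ R ∧ Relation.ReflTransGen (LieGraphAdj β R) a b},
       -b ∈ {b | b ∈ R ∧ Relation.ReflTransGen (LieGraphAdj β R) a b}) :=
  skewRootLie_component_general β hβ R hR a ha
end

section
/- Let (G,β,R) be a reduced skew root system of Jordan type with G an elementary abelian 2-group. Then the Jordan algebra J(R) is simple. -/
/-- `R` is a skew root system of Jordan type in `(G, β)`. -/
def IsSkewRootJordan {G : Type*} [AddCommGroup G] {F : Type*} [Field F]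
    (β : G → G → Fˣ) (R : Set G) : Prop :=
  AddSubgroup.closure R = ⊤ ∧ (∀ a ∈ R, -a ∈ R) ∧
  ∀ a ∈ R, ∀ b ∈ R, β a b ≠ -1 → a + b ∈ R

theorem Submodule.exists_mem_of_forall_filter_mem {K M ι κ : Type*} [DivisionRing K]
    [AddCommGroup M] [Module K M] {v : ι → M} {I : Submodule K M} (p : κ → ι → Prop)
    [∀ k, DecidablePred (p k)] (hsep : Pairwise fun i j => ∃ k, ¬(p k i ↔ p k j))
    (hI : ∀ k c, Finsupp.linearCombination K v c ∈ I →
      Finsupp.linearCombination K v (c.filter (p k)) ∈ I)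
    (c : ι →₀ K) (hc0 : c ≠ 0) (hc : Finsupp.linearCombination K v c ∈ I) : ∃ i, v i ∈ I := by
  induction hn : c.support.card using Nat.strong_induction_on generalizing c with
  | _ n ih =>
  by_cases hcard : c.support.card ≤ 1
  · obtain ⟨i, hi⟩ := Finsupp.support_nonempty_iff.2 hc0
    have hsingle : c = Finsupp.single i (c i) := by
      ext j
      by_cases hj : j ∈ c.support
      · rw [Finset.card_le_one.1 hcard j hj i hi, Finsupp.single_eq_same]
      · rw [Finsupp.notMem_support_iff.1 hj, Finsupp.single_eq_of_ne]
        rintro rfl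
        exact hj hi
    rw [hsingle, Finsupp.linearCombination_single,
      I.smul_mem_iff (Finsupp.mem_support_iff.1 hi)] at hc
    exact ⟨i, hc⟩
  · obtain ⟨i, hi, j, hj, hij⟩ := Finset.one_lt_card.1 (not_le.1 hcard)
    obtain ⟨k, hk⟩ := hsep hij
    have hmixed : (∃ x ∈ c.support, p k x) ∧ ∃ x ∈ c.support, ¬p k x := by
      by_cases hki : p k i
      · exact ⟨⟨i, hi, hki⟩, j, hj, fun hkj => hk ⟨fun _ => hkj, fun _ => hki⟩⟩
      · exact ⟨⟨j, hj, by tauto⟩, i, hi, hki⟩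
    refine ih _ ?_ (c.filter (p k)) ?_ (hI k c hc) rfl
    · rw [← hn, Finsupp.support_filter]
      exact Finset.card_lt_card (Finset.filter_ssubset.2 hmixed.2)
    · rw [← Finsupp.support_nonempty_iff, Finsupp.support_filter]
      exact Finset.filter_nonempty_iff.2 hmixed.1

namespace IsBichar

variable {G F : Type*} [AddCommGroup G] [Field F] {β : G → G → Fˣ}

theorem map_zero_left (hβ : IsBichar β) (b : G) : β 0 b = 1 := by
  simpa using hβ.1 0 0 b

theorem mul_self_eq_one (hβ : IsBichar β) (h2 : ∀ g : G, g + g = 0) (a b : G) :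
    β a b * β a b = 1 := by
  rw [← hβ.1, h2, hβ.map_zero_left]

theorem eq_one_or_eq_neg_one (hβ : IsBichar β) (h2 : ∀ g : G, g + g = 0) (a b : G) :
    β a b = 1 ∨ β a b = -1 := by
  have h : (β a b : F) * β a b = 1 := by
    rw [← Units.val_mul, hβ.mul_self_eq_one h2, Units.val_one]
  rcases mul_self_eq_one_iff.1 h with h | h
  · exact Or.inl (Units.ext h)
  · exact Or.inr (Units.ext (by rw [h, Units.val_neg, Units.val_one]))

theorem eq_one_of_forall_mem {R : Set G} (hβ : IsBichar β) (hR : AddSubgroup.closure R = ⊤)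
    {g : G} (hg : ∀ b ∈ R, β g b = 1) (h : G) : β g h = 1 := by
  let f : G →+ Additive Fˣ := AddMonoidHom.mk' (fun h => Additive.ofMul (β g h)) (hβ.2 g)
  have hf : f = 0 :=
    AddMonoidHom.eq_of_eqOn_dense hR fun b hb => congrArg Additive.ofMul (hg b hb)
  exact congrArg Additive.toMul (DFunLike.congr_fun hf h)

theorem exists_mem_ne_of_ne {R : Set G} (hβ : IsBichar β)
    (hred : ∀ g : G, (∀ h : G, β g h = 1) → g = 0) (hR : AddSubgroup.closure R = ⊤)
    {a₀ a₁ : G} (hne : a₀ ≠ a₁) : ∃ b ∈ R, β a₀ b ≠ β a₁ b := by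
  by_contra! h
  refine sub_ne_zero.2 hne (hred _ (hβ.eq_one_of_forall_mem hR fun b hb => ?_))
  have hsplit := hβ.1 (a₀ - a₁) a₁ b
  rwa [sub_add_cancel, h b hb, right_eq_mul] at hsplit

end IsBichar

section JordanProduct

variable (F : Type*) {A : Type*} [Field F] [Ring A] [Algebra F A]

def jordanMulLeft (x : A) : A →ₗ[F] A :=
  (1 / 2 : F) • (LinearMap.mulLeft F x + LinearMap.mulRight F x)

variable {F}

theorem jordanMulLeft_apply (x y : A) :
    jordanMulLeft F x y = (1 / 2 : F) • (x * y + y * x) :=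
  rfl

theorem jordanMulLeft_apply_one [NeZero (2 : F)] (x : A) : jordanMulLeft F x 1 = x := by
  rw [jordanMulLeft_apply, mul_one, one_mul, ← two_smul F, smul_smul,
    one_div_mul_cancel two_ne_zero, one_smul]

variable {G : Type*} [AddCommGroup G] {β ξ : G → G → Fˣ} {u : G → A}

open Classical in
theorem jordanMulLeft_homogeneous [NeZero (2 : F)]
    (hmul : ∀ a b : G, u a * u b = (ξ a b : F) • u (a + b))
    (hΨ : ∀ a b : G, ξ a b * (ξ b a)⁻¹ = β a b) {a b : G} (hpm : β a b = 1 ∨ β a b = -1) :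
    jordanMulLeft F (u b) (u a) = if β a b = 1 then (ξ b a : F) • u (b + a) else 0 := by
  have hξ : ξ a b = β a b * ξ b a := by rw [← mul_inv_eq_iff_eq_mul, hΨ]
  rw [jordanMulLeft_apply, hmul, hmul, add_comm a b, ← add_smul, hξ, Units.val_mul,
    ← one_add_mul]
  split_ifs with h
  · rw [h, Units.val_one, smul_smul, ← mul_assoc, one_add_one_eq_two,
      one_div_mul_cancel two_ne_zero, one_mul]
  · rw [hpm.resolve_left h, Units.val_neg, Units.val_one, add_neg_cancel, zero_mul, zero_smul,
      smul_zero]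

open Classical in
theorem jordanMulLeft_jordanMulLeft_homogeneous [NeZero (2 : F)] (h2 : ∀ g : G, g + g = 0)
    (hβ : IsAltBichar β) (hξ : IsBichar ξ)
    (hmul : ∀ a b : G, u a * u b = (ξ a b : F) • u (a + b))
    (hΨ : ∀ a b : G, ξ a b * (ξ b a)⁻¹ = β a b) (a b : G) :
    jordanMulLeft F (u b) (jordanMulLeft F (u b) (u a)) =
      if β a b = 1 then (ξ b b : F) • u a else 0 := by
  have hpm := hβ.1.eq_one_or_eq_neg_one h2
  rw [jordanMulLeft_homogeneous hmul hΨ (hpm a b)]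
  split_ifs with h
  · have hba : β (b + a) b = 1 := by rw [hβ.1.1, hβ.2, h, one_mul]
    have hcoef : (ξ b a : F) * ξ b (b + a) = ξ b b := by
      rw [← Units.val_mul, hξ.2, mul_left_comm, hξ.mul_self_eq_one h2, mul_one]
    rw [map_smul, jordanMulLeft_homogeneous hmul hΨ (hpm _ _), if_pos hba, ← add_assoc, h2,
      zero_add, smul_smul, hcoef]
  · exact map_zero _

open Classical in
theorem jordanMulLeft_jordanMulLeft_linearCombination [NeZero (2 : F)] (h2 : ∀ g : G, g + g = 0)
    (hβ : IsAltBichar β) (hξ : IsBichar ξ)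
    (hmul : ∀ a b : G, u a * u b = (ξ a b : F) • u (a + b))
    (hΨ : ∀ a b : G, ξ a b * (ξ b a)⁻¹ = β a b) (b : G) (c : G →₀ F) :
    jordanMulLeft F (u b) (jordanMulLeft F (u b) (Finsupp.linearCombination F u c)) =
      (ξ b b : F) • Finsupp.linearCombination F u (c.filter fun a => β a b = 1) := by
  induction c using Finsupp.induction_linear with
  | zero => rw [Finsupp.filter_zero, map_zero, map_zero, map_zero, smul_zero]
  | add c d hc hd => rw [map_add, map_add, map_add, hc, hd, Finsupp.filter_add, map_add, smul_add]
  | single a r =>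
    rw [Finsupp.linearCombination_single, map_smul, map_smul,
      jordanMulLeft_jordanMulLeft_homogeneous h2 hβ hξ hmul hΨ]
    by_cases h : β a b = 1
    · rw [if_pos h, Finsupp.filter_single_of_pos (p := fun x => β x b = 1) h,
        Finsupp.linearCombination_single, smul_comm]
    · rw [if_neg h, Finsupp.filter_single_of_neg (p := fun x => β x b = 1) h, map_zero,
        smul_zero, smul_zero]

end JordanProduct

theorem skewRootJordan_elementary_two_group_simple_general
    {G : Type*} [AddCommGroup G]
    {F : Type*} [Field F] [CharZero F]
    {A : Type*} [Ring A] [Algebra F A]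
    (h2 : ∀ g : G, g + g = 0)
    (β ξ : G → G → Fˣ) (hβ : IsAltBichar β)
    (hξ : IsBichar ξ) (hΨ : ∀ a b : G, ξ a b * (ξ b a)⁻¹ = β a b)
    (hred : ∀ g : G, (∀ h : G, β g h = 1) → g = 0)
    (R : Set G) (hR : IsSkewRootJordan β R)
    (u : G → A) (hone : u 0 = 1)
    (hmul : ∀ a b : G, u a * u b = (ξ a b : F) • u (a + b)) :
    ∀ I : Submodule F A, I ≤ Submodule.span F (u '' R) →
      (∀ x ∈ Submodule.span F (u '' R), ∀ y ∈ I, (1/2 : F) • (x * y + y * x) ∈ I) →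
      I ≠ ⊥ → I = Submodule.span F (u '' R) := by
  classical
  intro I hIle hIop hIne
  have hpm := hβ.1.eq_one_or_eq_neg_one h2
  have hroot : ∀ b ∈ R, ∀ y ∈ I, jordanMulLeft F (u b) y ∈ I := fun b hb =>
    hIop (u b) (Submodule.subset_span ⟨b, hb, rfl⟩)
  have hsep : Pairwise fun a₀ a₁ => ∃ b : R, ¬(β a₀ b = 1 ↔ β a₁ b = 1) := by
    intro a₀ a₁ hne
    obtain ⟨b, hb, hβb⟩ := hβ.1.exists_mem_ne_of_ne hred hR.1 hne
    refine ⟨⟨b, hb⟩, fun hiff => hβb ?_⟩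
    rcases hpm a₀ b with h₀ | h₀ <;> rcases hpm a₁ b with h₁ | h₁ <;> simp_all
  have hfilter : ∀ (b : R) c, Finsupp.linearCombination F u c ∈ I →
      Finsupp.linearCombination F u (c.filter fun a => β a b = 1) ∈ I := by
    intro b c hc
    have h := hroot b b.2 _ (hroot b b.2 _ hc)
    rwa [jordanMulLeft_jordanMulLeft_linearCombination h2 hβ hξ hmul hΨ,
      I.smul_mem_iff (Units.ne_zero _)] at h
  obtain ⟨x, hxI, hx0⟩ := (Submodule.ne_bot_iff I).1 hIne
  obtain ⟨c, -, rfl⟩ := (Finsupp.mem_span_image_iff_linearCombination F).1 (hIle hxI)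
  obtain ⟨a, ha⟩ := Submodule.exists_mem_of_forall_filter_mem _ hsep hfilter c
    (by rintro rfl; exact hx0 (map_zero _)) hxI
  have hone_mem : (1 : A) ∈ I := by
    have h : jordanMulLeft F (u a) (u a) ∈ I := hIop _ (hIle ha) _ ha
    rwa [jordanMulLeft_homogeneous hmul hΨ (hpm a a), if_pos (hβ.2 a), h2, hone,
      I.smul_mem_iff (Units.ne_zero _)] at h
  refine le_antisymm hIle (Submodule.span_le.2 ?_)
  rintro _ ⟨g, hg, rfl⟩
  rw [SetLike.mem_coe, ← jordanMulLeft_apply_one (F := F) (u g)]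
  exact hroot g hg 1 hone_mem

/-- Let `(G,β,R)` be a reduced (nonsingular) skew root system of Jordan type with `G` a
finite elementary abelian 2-group.  Then the Jordan algebra `J(R) = ⊕_{a ∈ R} F u_a`
(inside the twisted group algebra, with product `x ∘ y = (xy+yx)/2`) is simple:
every nonzero ideal equals `J(R)`. -/
theorem skewRootJordan_elementary_two_group_simple
    {G : Type*} [AddCommGroup G] [Finite G]
    {F : Type*} [Field F] [IsAlgClosed F] [CharZero F]
    {A : Type*} [Ring A] [Algebra F A]
    (h2 : ∀ g : G, g + g = 0)
    (β ξ : G → G → Fˣ) (hβ : IsAltBichar β)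
    (hξ : IsBichar ξ) (hΨ : ∀ a b : G, ξ a b * (ξ b a)⁻¹ = β a b)
    (hred : ∀ g : G, (∀ h : G, β g h = 1) → g = 0)
    (R : Set G) (hR : IsSkewRootJordan β R)
    (u : G → A) (hind : LinearIndependent F u) (hone : u 0 = 1)
    (hmul : ∀ a b : G, u a * u b = (ξ a b : F) • u (a + b)) :
    ∀ I : Submodule F A, I ≤ Submodule.span F (u '' R) →
      (∀ x ∈ Submodule.span F (u '' R), ∀ y ∈ I, (1/2 : F) • (x * y + y * x) ∈ I) →
      I ≠ ⊥ → I = Submodule.span F (u '' R) :=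
  skewRootJordan_elementary_two_group_simple_general h2 β ξ hβ hξ hΨ hred R hR u hone hmul
end
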